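/- arXiv:2508.14280 — 5 statements merged into one kernel-verified Lean document; each statement's English description precedes it below -/
import Mathlib

section
/- Let c, r_0, r_1, …, r_M be unit vectors in a real inner product space, let S = span{r_0, …, r_M}, and suppose ⟪c, r_i⟫ ≥ 0 for all i, proj_S c ≠ 0, and c ∉ S. Then for every index j with ⟪c, r_j⟫ > 0, the unit vector c' = proj_S c / ‖proj_S c‖ satisfies the strict inequality ⟪c', r_j⟫ > ⟪c, r_j⟫. -/
open RealInnerProductSpace

/-- **Theorem 1 (strict form).** If `c, r_0, …, r_M` are unit vectors, `⟪c, r_i⟫ ≥ 0` for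
all `i`, `proj_S c ≠ 0` and `c ∉ S = span {r_0, …, r_M}`, then for every index `j` with
`⟪c, r_j⟫ > 0` the unit vector `c' = proj_S c / ‖proj_S c‖` satisfies
`⟪c', r_j⟫ > ⟪c, r_j⟫`. -/
theorem stmt_1 {E : Type*} [NormedAddCommGroup E] [InnerProductSpace ℝ E]
    [FiniteDimensional ℝ E] (M : ℕ) (c : E) (r : Fin (M + 1) → E)
    (hc : ‖c‖ = 1) (hr : ∀ i, ‖r i‖ = 1)
    (hpos : ∀ i, 0 ≤ ⟪c, r i⟫)
    (hproj : (Submodule.orthogonalProjectionOnto (Submodule.span ℝ (Set.range r)) c : E) ≠ 0)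
    (hcS : c ∉ Submodule.span ℝ (Set.range r)) :
    ∀ j, 0 < ⟪c, r j⟫ →
      ⟪c, r j⟫ <
        ⟪‖(Submodule.orthogonalProjectionOnto (Submodule.span ℝ (Set.range r)) c : E)‖⁻¹ •
          (Submodule.orthogonalProjectionOnto (Submodule.span ℝ (Set.range r)) c : E), r j⟫ := by
  intro j hj
  set S := Submodule.span ℝ (Set.range r) with hS
  set p : E := (Submodule.orthogonalProjectionOnto S c : E) with hp
  have hrS : r j ∈ S := Submodule.subset_span ⟨j, rfl⟩
  have horth : ⟪c - p, r j⟫ = 0 := by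
    rw [real_inner_comm]
    exact Submodule.sub_starProjection_mem_orthogonal (K := S) c _ hrS
  have hinner : ⟪p, r j⟫ = ⟪c, r j⟫ := by
    have := inner_sub_left (𝕜 := ℝ) c p (r j)
    rw [horth] at this
    linarith
  -- norm bound
  have hcp : c - p ≠ 0 := by
    intro h
    apply hcS
    have : c = p := by rwa [sub_eq_zero] at h
    rw [this]
    exact (Submodule.orthogonalProjectionOnto S c).2
  have hpyth : ‖p‖ ^ 2 + ‖c - p‖ ^ 2 = 1 := by
    have h0 : ⟪p, c - p⟫ = 0 :=
      Submodule.sub_starProjection_mem_orthogonal (K := S) c p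
        (Submodule.orthogonalProjectionOnto S c).2
    have := norm_add_sq_real p (c - p)
    simp only [h0, mul_zero, add_zero, add_sub_cancel] at this
    rw [hc] at this
    linarith
  have hlt : ‖p‖ < 1 := by
    have h1 : 0 < ‖c - p‖ ^ 2 := pow_pos (norm_pos_iff.mpr hcp) 2
    nlinarith [norm_nonneg p]
  have hppos : 0 < ‖p‖ := norm_pos_iff.mpr hproj
  rw [real_inner_smul_left, hinner]
  have hinv : 1 < ‖p‖⁻¹ := by
    rw [lt_inv_comm₀ (by norm_num) hppos]
    simpa using hlt
  nlinarith
end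

section
/- Let x and r be unit vectors in a real inner product space with ⟪x, r⟫ ≥ 0, and let w₀, w₁ be real numbers with w₀ ≥ 0 and w₁ < 0 such that w₀x + w₁r ≠ 0 and w₀x − w₁r ≠ 0. Then ⟪(w₀x + w₁r)/‖w₀x + w₁r‖, r⟫ ≤ ⟪(w₀x − w₁r)/‖w₀x − w₁r‖, r⟫. -/
open RealInnerProductSpace

/-- **Theorem 2, mixed-sign case, `r`-component.** For unit vectors `x, r` with
`⟪x, r⟫ ≥ 0` and weights `w₀ ≥ 0`, `w₁ < 0` with `w₀x + w₁r ≠ 0` and `w₀x − w₁r ≠ 0`,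
inverting the sign of `w₁` does not decrease the similarity of the normalized
direction to `r`. -/
theorem stmt_2 {E : Type*} [NormedAddCommGroup E] [InnerProductSpace ℝ E]
    (x r : E) (hx : ‖x‖ = 1) (hr : ‖r‖ = 1) (hxr : 0 ≤ ⟪x, r⟫)
    (w₀ w₁ : ℝ) (hw₀ : 0 ≤ w₀) (hw₁ : w₁ < 0)
    (h₁ : w₀ • x + w₁ • r ≠ 0) (h₂ : w₀ • x - w₁ • r ≠ 0) :
    ⟪‖w₀ • x + w₁ • r‖⁻¹ • (w₀ • x + w₁ • r), r⟫ ≤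
      ⟪‖w₀ • x - w₁ • r‖⁻¹ • (w₀ • x - w₁ • r), r⟫ := by
  set c := ⟪x, r⟫ with hc
  have hc1 : c ≤ 1 := by
    have := real_inner_le_norm x r
    simpa [hx, hr] using this
  set a := ‖w₀ • x + w₁ • r‖ with ha
  set b := ‖w₀ • x - w₁ • r‖ with hb
  have hapos : 0 < a := norm_pos_iff.mpr h₁
  have hbpos : 0 < b := norm_pos_iff.mpr h₂
  have hrr : ⟪r, r⟫ = 1 := by
    rw [real_inner_self_eq_norm_sq, hr]; norm_num
  have ha2 : a ^ 2 = w₀ ^ 2 + w₁ ^ 2 + 2 * (w₀ * w₁ * c) := by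
    rw [ha, ← real_inner_self_eq_norm_sq]
    simp only [inner_add_add_self, real_inner_smul_left, real_inner_smul_right,
      real_inner_self_eq_norm_sq, hx, hr, ← hc, norm_smul, mul_pow,
      Real.norm_eq_abs, sq_abs]
    rw [real_inner_comm x r, hc]
    ring
  have hb2 : b ^ 2 = w₀ ^ 2 + w₁ ^ 2 - 2 * (w₀ * w₁ * c) := by
    rw [hb, ← real_inner_self_eq_norm_sq]
    simp only [inner_sub_sub_self, real_inner_smul_left, real_inner_smul_right,
      real_inner_self_eq_norm_sq, hx, hr, ← hc, norm_smul, mul_pow,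
      Real.norm_eq_abs, sq_abs]
    rw [real_inner_comm x r, hc]
    ring
  have hinner1 : ⟪w₀ • x + w₁ • r, r⟫ = w₀ * c + w₁ := by
    simp [inner_add_left, real_inner_smul_left, hrr, ← hc, hr]
  have hinner2 : ⟪w₀ • x - w₁ • r, r⟫ = w₀ * c - w₁ := by
    simp [inner_sub_left, real_inner_smul_left, hrr, ← hc, hr]
  rw [real_inner_smul_left, real_inner_smul_left, hinner1, hinner2]
  have hRpos : 0 < w₀ * c - w₁ := by nlinarith [mul_nonneg hw₀ hxr]
  rcases le_or_gt (w₀ * c + w₁) 0 with hL | hL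
  · have h1 : a⁻¹ * (w₀ * c + w₁) ≤ 0 :=
      mul_nonpos_of_nonneg_of_nonpos (by positivity) hL
    have h2 : 0 ≤ b⁻¹ * (w₀ * c - w₁) := by positivity
    linarith
  · rw [inv_mul_eq_div, inv_mul_eq_div, div_le_div_iff₀ hapos hbpos]
    have key : ((w₀ * c + w₁) * b) ^ 2 ≤ ((w₀ * c - w₁) * a) ^ 2 := by
      have expand : ((w₀ * c - w₁) * a) ^ 2 - ((w₀ * c + w₁) * b) ^ 2 =
          4 * w₀ ^ 3 * (-w₁) * c * (1 - c ^ 2) := by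
        rw [mul_pow, mul_pow, ha2, hb2]; ring
      nlinarith [mul_nonneg (mul_nonneg (mul_nonneg (by positivity : (0:ℝ) ≤ 4 * w₀ ^ 3)
        (by linarith : (0:ℝ) ≤ -w₁)) hxr) (by nlinarith : (0:ℝ) ≤ 1 - c ^ 2)]
    exact le_of_pow_le_pow_left₀ two_ne_zero
      (mul_nonneg hRpos.le hapos.le) key
end

section
/- Let x and r be unit vectors in a real inner product space with ⟪x, r⟫ ≥ 0, and let w₀, w₁ be real numbers with w₀ ≥ 0 and w₁ < 0 such that w₀x + w₁r ≠ 0 and w₀x − w₁r ≠ 0. Then ⟪(w₀x + w₁r)/‖w₀x + w₁r‖, x⟫ ≤ ⟪(w₀x − w₁r)/‖w₀x − w₁r‖, x⟫. -/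
open RealInnerProductSpace

/-- **Theorem 2, mixed-sign case, `x`-component.** For unit vectors `x, r` with
`⟪x, r⟫ ≥ 0` and weights `w₀ ≥ 0`, `w₁ < 0` with `w₀x + w₁r ≠ 0` and `w₀x − w₁r ≠ 0`,
inverting the sign of `w₁` does not decrease the similarity of the normalized
direction to `x`. -/
theorem stmt_3 {E : Type*} [NormedAddCommGroup E] [InnerProductSpace ℝ E]
    (x r : E) (hx : ‖x‖ = 1) (hr : ‖r‖ = 1) (hxr : 0 ≤ ⟪x, r⟫)
    (w₀ w₁ : ℝ) (hw₀ : 0 ≤ w₀) (hw₁ : w₁ < 0)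
    (h₁ : w₀ • x + w₁ • r ≠ 0) (h₂ : w₀ • x - w₁ • r ≠ 0) :
    ⟪‖w₀ • x + w₁ • r‖⁻¹ • (w₀ • x + w₁ • r), x⟫ ≤
      ⟪‖w₀ • x - w₁ • r‖⁻¹ • (w₀ • x - w₁ • r), x⟫ := by
  set c : ℝ := ⟪x, r⟫ with hc
  have hc1 : c ≤ 1 := by
    have := real_inner_le_norm x r
    rwa [hx, hr, one_mul] at this
  have hrx : ⟪r, x⟫ = c := by rw [real_inner_comm]
  have hxx : ⟪x, x⟫ = 1 := by
    rw [real_inner_self_eq_norm_sq, hx]; norm_num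
  set Np := ‖w₀ • x + w₁ • r‖ with hNp
  set Nm := ‖w₀ • x - w₁ • r‖ with hNm
  have hNp0 : 0 < Np := norm_pos_iff.mpr h₁
  have hNm0 : 0 < Nm := norm_pos_iff.mpr h₂
  have hNpsq : Np ^ 2 = w₀ ^ 2 + w₁ ^ 2 + 2 * (w₀ * w₁ * c) := by
    rw [hNp, ← real_inner_self_eq_norm_sq]
    simp only [inner_add_add_self, real_inner_smul_left, real_inner_smul_right, hxx, hrx]
    have hrr : ⟪r, r⟫ = 1 := by
      rw [real_inner_self_eq_norm_sq, hr]; norm_num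
    rw [hrr]; ring
  have hNmsq : Nm ^ 2 = w₀ ^ 2 + w₁ ^ 2 - 2 * (w₀ * w₁ * c) := by
    rw [hNm, ← real_inner_self_eq_norm_sq]
    simp only [inner_sub_sub_self, real_inner_smul_left, real_inner_smul_right, hxx, hrx]
    have hrr : ⟪r, r⟫ = 1 := by
      rw [real_inner_self_eq_norm_sq, hr]; norm_num
    rw [hrr]; ring
  have hip : ⟪w₀ • x + w₁ • r, x⟫ = w₀ + w₁ * c := by
    simp [inner_add_left, real_inner_smul_left, hxx, hrx, hx]
  have him : ⟪w₀ • x - w₁ • r, x⟫ = w₀ - w₁ * c := by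
    simp [inner_sub_left, real_inner_smul_left, hxx, hrx, hx]
  rw [real_inner_smul_left, real_inner_smul_left, hip, him,
    inv_mul_eq_div, inv_mul_eq_div, div_le_div_iff₀ hNp0 hNm0]
  have key : (w₀ + w₁ * c) * Nm ≤ (w₀ - w₁ * c) * Np := by
    rcases le_or_gt (w₀ + w₁ * c) 0 with h | h
    · have h1 : (w₀ + w₁ * c) * Nm ≤ 0 := mul_nonpos_of_nonpos_of_nonneg h hNm0.le
      have h2 : 0 ≤ (w₀ - w₁ * c) * Np := by
        apply mul_nonneg _ hNp0.le
        nlinarith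
      linarith
    · have hsq : ((w₀ + w₁ * c) * Nm) ^ 2 ≤ ((w₀ - w₁ * c) * Np) ^ 2 := by
        have expand : ((w₀ - w₁ * c) * Np) ^ 2 - ((w₀ + w₁ * c) * Nm) ^ 2
            = 4 * w₀ * w₁ ^ 3 * c * (c ^ 2 - 1) := by
          rw [mul_pow, mul_pow, hNpsq, hNmsq]; ring
        have h3 : w₁ ^ 3 ≤ 0 := by nlinarith [sq_nonneg w₁]
        have h4 : 0 ≤ c * (1 - c ^ 2) := by nlinarith
        have h5 : 0 ≤ w₀ * (-(w₁ ^ 3)) * (c * (1 - c ^ 2)) :=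
          mul_nonneg (mul_nonneg hw₀ (neg_nonneg.mpr h3)) h4
        have heq : 4 * w₀ * w₁ ^ 3 * c * (c ^ 2 - 1)
            = 4 * (w₀ * (-(w₁ ^ 3)) * (c * (1 - c ^ 2))) := by ring
        linarith [expand]
      have hpos : 0 ≤ (w₀ - w₁ * c) * Np := by
        apply mul_nonneg _ hNp0.le; nlinarith
      nlinarith [mul_pos h hNm0]
  exact key
end

section
/- Let x and r be unit vectors in a real inner product space with ⟪x, r⟫ ≥ 0, and let w₀ < 0 and w₁ < 0 be real numbers with w₀x + w₁r ≠ 0. Setting d = (w₀x + w₁r)/‖w₀x + w₁r‖ and d' = (−w₀x − w₁r)/‖−w₀x − w₁r‖, one has ⟪d', r⟫ ≥ ⟪d, r⟫ and ⟪d', x⟫ ≥ ⟪d, x⟫. -/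
open RealInnerProductSpace

/-- **Theorem 2, both-negative case.** For unit vectors `x, r` with `⟪x, r⟫ ≥ 0` and
weights `w₀ < 0`, `w₁ < 0` with `w₀x + w₁r ≠ 0`, replacing
`d = (w₀x + w₁r)/‖w₀x + w₁r‖` by `d' = (−w₀x − w₁r)/‖−w₀x − w₁r‖` does not decrease
the similarities to `r` and to `x`. -/
theorem stmt_4 {E : Type*} [NormedAddCommGroup E] [InnerProductSpace ℝ E]
    (x r : E) (hx : ‖x‖ = 1) (hr : ‖r‖ = 1) (hxr : 0 ≤ ⟪x, r⟫)
    (w₀ w₁ : ℝ) (hw₀ : w₀ < 0) (hw₁ : w₁ < 0)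
    (h₁ : w₀ • x + w₁ • r ≠ 0) :
    ⟪‖w₀ • x + w₁ • r‖⁻¹ • (w₀ • x + w₁ • r), r⟫ ≤
      ⟪‖(-w₀) • x - w₁ • r‖⁻¹ • ((-w₀) • x - w₁ • r), r⟫ ∧
    ⟪‖w₀ • x + w₁ • r‖⁻¹ • (w₀ • x + w₁ • r), x⟫ ≤
      ⟪‖(-w₀) • x - w₁ • r‖⁻¹ • ((-w₀) • x - w₁ • r), x⟫ := by
  have key : (-w₀) • x - w₁ • r = -(w₀ • x + w₁ • r) := by module
  have hc : (0:ℝ) ≤ ‖w₀ • x + w₁ • r‖⁻¹ := by positivity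
  have hrx : ⟪r, x⟫ = ⟪x, r⟫ := real_inner_comm x r ▸ rfl
  have hvr : ⟪w₀ • x + w₁ • r, r⟫ ≤ 0 := by
    rw [inner_add_left, inner_smul_left, inner_smul_left, real_inner_self_eq_norm_sq, hr]
    simp only [starRingEnd_apply, star_trivial]
    nlinarith
  have hvx : ⟪w₀ • x + w₁ • r, x⟫ ≤ 0 := by
    rw [inner_add_left, inner_smul_left, inner_smul_left, real_inner_self_eq_norm_sq, hx, hrx]
    simp only [starRingEnd_apply, star_trivial]
    nlinarith
  rw [key, norm_neg]
  simp only [inner_smul_left, inner_neg_left, starRingEnd_apply, star_trivial]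
  constructor <;> nlinarith [mul_nonneg hc (neg_nonneg.2 hvr), mul_nonneg hc (neg_nonneg.2 hvx)]
end

section
/- Let r be a unit vector and v a vector in a real inner product space with ⟪v, r⟫ ≥ 0, and let w < 0 be a real number with v + wr ≠ 0 and v − wr ≠ 0. Then ⟪(v + wr)/‖v + wr‖, r⟫ ≤ ⟪(v − wr)/‖v − wr‖, r⟫. -/
open RealInnerProductSpace

/-- **Theorem 2, multi-rationale generalization.** Let `r` be a unit vector and `v` a
vector with `⟪v, r⟫ ≥ 0` (here `v` plays the role of the positively weighted
combination of the image embedding and the remaining rationale embeddings), and let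
`w < 0` with `v + wr ≠ 0` and `v − wr ≠ 0`. Then inverting the sign of `w` does not
decrease the similarity of the resulting normalized direction to `r`. -/
theorem stmt_7 {E : Type*} [NormedAddCommGroup E] [InnerProductSpace ℝ E]
    (r v : E) (hr : ‖r‖ = 1) (hvr : 0 ≤ ⟪v, r⟫)
    (w : ℝ) (hw : w < 0) (h₁ : v + w • r ≠ 0) (h₂ : v - w • r ≠ 0) :
    ⟪‖v + w • r‖⁻¹ • (v + w • r), r⟫ ≤ ⟪‖v - w • r‖⁻¹ • (v - w • r), r⟫ := by
  set t := ⟪v, r⟫ with ht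
  have hrr : ⟪r, r⟫ = 1 := by
    rw [real_inner_self_eq_norm_sq, hr]; norm_num
  have ha : (0:ℝ) < ‖v + w • r‖ := norm_pos_iff.mpr h₁
  have hb : (0:ℝ) < ‖v - w • r‖ := norm_pos_iff.mpr h₂
  set a := ‖v + w • r‖
  set b := ‖v - w • r‖
  have hia : ⟪v + w • r, r⟫ = t + w := by
    rw [inner_add_left, real_inner_smul_left, hrr]; ring
  have hib : ⟪v - w • r, r⟫ = t - w := by
    rw [inner_sub_left, real_inner_smul_left, hrr]; ring
  have ha2 : a ^ 2 = ‖v‖ ^ 2 + 2 * w * t + w ^ 2 := by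
    have := @norm_add_sq_real _ _ _ v (w • r)
    rw [real_inner_smul_right, norm_smul, hr] at this
    simp only [a]
    rw [this]
    have : |w| ^ 2 = w ^ 2 := sq_abs w
    simp [Real.norm_eq_abs, this]
    ring
  have hb2 : b ^ 2 = ‖v‖ ^ 2 - 2 * w * t + w ^ 2 := by
    have := @norm_sub_sq_real _ _ _ v (w • r)
    rw [real_inner_smul_right, norm_smul, hr] at this
    simp only [b]
    rw [this]
    have : |w| ^ 2 = w ^ 2 := sq_abs w
    simp [Real.norm_eq_abs, this]
    ring
  have hcs : t ≤ ‖v‖ := by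
    have := real_inner_le_norm v r
    rwa [hr, mul_one] at this
  rw [real_inner_smul_left, real_inner_smul_left, hia, hib]
  by_cases hpos : t + w ≤ 0
  · have hL : a⁻¹ * (t + w) ≤ 0 :=
      mul_nonpos_of_nonneg_of_nonpos (inv_nonneg.mpr ha.le) hpos
    have hR : 0 ≤ b⁻¹ * (t - w) := by
      apply mul_nonneg (inv_nonneg.mpr hb.le); linarith
    linarith
  · push_neg at hpos
    have hv2 : t ^ 2 ≤ ‖v‖ ^ 2 := by nlinarith
    have hsq : ((t + w) * b) ^ 2 ≤ ((t - w) * a) ^ 2 := by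
      have e : ((t - w) * a) ^ 2 - ((t + w) * b) ^ 2 = (-4) * w * t * (‖v‖ ^ 2 - t ^ 2) := by
        rw [mul_pow, mul_pow, ha2, hb2]; ring
      nlinarith [mul_nonneg (mul_nonneg (neg_nonneg.mpr hw.le) hvr) (sub_nonneg.mpr hv2)]
    have hsum : 0 < (t - w) * a + (t + w) * b := add_pos (mul_pos (by linarith : (0:ℝ) < t - w) ha) (mul_pos hpos hb)
    have key : (t + w) * b ≤ (t - w) * a := by nlinarith [hsq, hsum]
    rw [inv_mul_eq_div, inv_mul_eq_div, div_le_div_iff₀ ha hb]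
    linarith
end
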